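/- For n > 2, the Fishburn permutations of size n avoiding the classical pattern 132 are exactly the disjoint union of {1 ⊖ π : π is a Fishburn permutation of size n-1 avoiding 132} and {π ⊕ 1 : π is a Fishburn permutation of size n-1 avoiding 132}; consequently F_n(132) = 2·F_{n-1}(132). -/

import Mathlib

open Finset

open Finset

/-- The list of values of a permutation of `Fin n` (0-based values). -/
def permList {n : ℕ} (π : Equiv.Perm (Fin n)) : List ℕ :=
  (List.finRange n).map fun i => (π i : ℕ)

/-- A sequence `w` of distinct integers contains the classical pattern `p`:
some subsequence of `w` is order-isomorphic to `p`. -/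
def SeqContains (w p : List ℕ) : Prop :=
  ∃ f : Fin p.length → Fin w.length, StrictMono f ∧
    ∀ i j : Fin p.length, p.get i < p.get j ↔ w.get (f i) < w.get (f j)
/-- A permutation avoids a classical pattern (given as the list of its values). -/
def AvoidsPat {n : ℕ} (π : Equiv.Perm (Fin n)) (p : List ℕ) : Prop :=
  ¬ SeqContains (permList π) p

/-- `π` is a Fishburn permutation: it avoids the bivincular pattern (231,{1},{1}),
i.e. there are no positions `i < k` with `π i = π k + 1` and `π i < π (i+1)`
(0-based values, so `π i = π k + 1` encodes `π(i) > 1` and `π(k) = π(i) - 1`). -/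
def IsFishburn {n : ℕ} (π : Equiv.Perm (Fin n)) : Prop :=
  ∀ i k : ℕ, ∀ hi : i < n, ∀ hk : k < n, ∀ _hik : i < k,
    (π ⟨i, hi⟩ : ℕ) = (π ⟨k, hk⟩ : ℕ) + 1 →
    ¬ ((π ⟨i, hi⟩ : ℕ) < (π ⟨i + 1, by omega⟩ : ℕ))

/-- A permutation is indecomposable if it is not the direct sum of two nonempty
permutations, i.e. no proper nonempty initial segment of positions maps onto the
corresponding initial segment of values. -/
def IsIndecomposable {n : ℕ} (π : Equiv.Perm (Fin n)) : Prop :=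
  ¬ ∃ k : ℕ, 0 < k ∧ k < n ∧ ∀ i : Fin n, (i : ℕ) < k → (π i : ℕ) < k

/-- The direct sum `π ⊕ 1`: `π` followed by a new maximal entry at the end. -/
def sumOne {n : ℕ} (π : Equiv.Perm (Fin n)) : Equiv.Perm (Fin (n + 1)) :=
  finSuccEquivLast.trans ((Equiv.optionCongr π).trans finSuccEquivLast.symm)

/-- The skew sum `1 ⊖ π`: a new maximal entry in front, followed by `π`. -/
def oneSkew {n : ℕ} (π : Equiv.Perm (Fin n)) : Equiv.Perm (Fin (n + 1)) :=
  (finSuccEquiv n).trans ((Equiv.optionCongr π).trans finSuccEquivLast.symm)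

section Coord
variable {n : ℕ} (π : Equiv.Perm (Fin n))

lemma sumOne_castSucc (i : Fin n) : sumOne π i.castSucc = (π i).castSucc := by
  simp [sumOne, finSuccEquivLast_castSucc, finSuccEquivLast_symm_some]

lemma sumOne_last : sumOne π (Fin.last n) = Fin.last n := by
  simp [sumOne, finSuccEquivLast_last, finSuccEquivLast_symm_none]

lemma oneSkew_zero : oneSkew π 0 = Fin.last n := by
  simp [oneSkew, finSuccEquiv_zero, finSuccEquivLast_symm_none]

lemma oneSkew_succ (i : Fin n) : oneSkew π i.succ = (π i).castSucc := by
  simp [oneSkew, finSuccEquiv_succ, finSuccEquivLast_symm_some]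

lemma sumOne_coe' (j : ℕ) (hj : j < n + 1) (hj' : j < n) :
    ((sumOne π ⟨j, hj⟩ : Fin (n+1)) : ℕ) = (π ⟨j, hj'⟩ : ℕ) := by
  have : (⟨j, hj⟩ : Fin (n+1)) = (⟨j, hj'⟩ : Fin n).castSucc := rfl
  rw [this, sumOne_castSucc]; rfl

lemma sumOne_coe_last (j : ℕ) (hj : j < n + 1) (hj' : j = n) :
    ((sumOne π ⟨j, hj⟩ : Fin (n+1)) : ℕ) = n := by
  have : (⟨j, hj⟩ : Fin (n+1)) = Fin.last n := by
    ext; simp only [Fin.val_last]; omega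
  rw [this, sumOne_last]; rfl

lemma oneSkew_coe_zero (j : ℕ) (hj : j < n + 1) (hj' : j = 0) :
    ((oneSkew π ⟨j, hj⟩ : Fin (n+1)) : ℕ) = n := by
  have : (⟨j, hj⟩ : Fin (n+1)) = 0 := by
    ext; simp only [Fin.val_zero]; omega
  rw [this, oneSkew_zero]; rfl

lemma oneSkew_coe_succ (j j' : ℕ) (hj : j < n + 1) (hj' : j' < n) (hjj : j = j' + 1) :
    ((oneSkew π ⟨j, hj⟩ : Fin (n+1)) : ℕ) = (π ⟨j', hj'⟩ : ℕ) := by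
  have : (⟨j, hj⟩ : Fin (n+1)) = (⟨j', hj'⟩ : Fin n).succ := by
    ext; simp only [Fin.val_succ]; omega
  rw [this, oneSkew_succ]; rfl

lemma perm_val_congr {a b : ℕ} (ha : a < n) (hb : b < n) (h : a = b) :
    (π ⟨a, ha⟩ : ℕ) = (π ⟨b, hb⟩ : ℕ) := by subst h; rfl

lemma sumOne_le (x : Fin (n+1)) : ((sumOne π x : Fin (n+1)) : ℕ) ≤ n := Fin.is_le _

end Coord

section Fish
variable {n : ℕ} (π : Equiv.Perm (Fin n))

lemma isFishburn_sumOne : IsFishburn (sumOne π) ↔ IsFishburn π := by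
  constructor
  · intro h i k hi hk hik heq hlt
    have hi' : i < n + 1 := by omega
    have hk' : k < n + 1 := by omega
    have hi1 : i + 1 < n := by omega
    refine h i k hi' hk' hik ?_ ?_
    · rw [sumOne_coe' π i hi' hi, sumOne_coe' π k hk' hk]; exact heq
    · rw [sumOne_coe' π i hi' hi, sumOne_coe' π (i+1) (by omega) hi1]; exact hlt
  · intro h i k hi hk hik heq hlt
    have hkn : k < n := by
      by_contra h'
      have hk2 : k = n := by omega
      rw [sumOne_coe_last π k hk hk2] at heq
      have := Fin.is_le (sumOne π ⟨i, hi⟩)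
      omega
    have hin : i < n := by omega
    have hi1 : i + 1 < n := by omega
    rw [sumOne_coe' π i hi hin, sumOne_coe' π k hk hkn] at heq
    rw [sumOne_coe' π i hi hin, sumOne_coe' π (i+1) (by omega) hi1] at hlt
    exact h i k hin hkn hik heq hlt

lemma isFishburn_oneSkew : IsFishburn (oneSkew π) ↔ IsFishburn π := by
  constructor
  · intro h i k hi hk hik heq hlt
    have hi' : i + 1 < n + 1 := by omega
    have hk' : k + 1 < n + 1 := by omega
    have hi1 : i + 1 < n := by omega
    refine h (i+1) (k+1) hi' hk' (by omega) ?_ ?_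
    · rw [oneSkew_coe_succ π (i+1) i hi' hi rfl, oneSkew_coe_succ π (k+1) k hk' hk rfl]
      exact heq
    · rw [oneSkew_coe_succ π (i+1) i hi' hi rfl,
        oneSkew_coe_succ π (i+1+1) (i+1) (by omega) hi1 rfl]
      exact hlt
  · intro h i k hi hk hik heq hlt
    rcases Nat.eq_zero_or_pos i with hi0 | hpos
    · -- τ 0 = n is maximal, contradiction with hlt
      have hn : 0 < n := by omega
      rw [oneSkew_coe_zero π i hi hi0] at hlt
      have e1 : ((oneSkew π ⟨i+1, by omega⟩ : Fin (n+1)) : ℕ) = (π ⟨0, hn⟩ : ℕ) :=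
        oneSkew_coe_succ π (i+1) 0 (by omega) hn (by omega)
      rw [e1] at hlt
      have := Fin.is_lt (π ⟨0, hn⟩)
      omega
    · have hin : i - 1 < n := by omega
      have hkn : k - 1 < n := by omega
      have hi1 : i < n := by omega
      rw [oneSkew_coe_succ π i (i-1) hi hin (by omega),
        oneSkew_coe_succ π k (k-1) hk hkn (by omega)] at heq
      rw [oneSkew_coe_succ π i (i-1) hi hin (by omega),
        oneSkew_coe_succ π (i+1) i (by omega) hi1 (by omega)] at hlt
      have := h (i-1) (k-1) hin hkn (by omega) heq
      rw [perm_val_congr π hi1 (by omega : i - 1 + 1 < n) (by omega)] at hlt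
      exact this hlt

end Fish
lemma permList_length {n : ℕ} (π : Equiv.Perm (Fin n)) : (permList π).length = n := by
  simp [permList]

lemma permList_get {n : ℕ} (π : Equiv.Perm (Fin n)) (i : Fin (permList π).length) :
    (permList π).get i = (π ⟨(i : ℕ), by simpa [permList_length] using i.2⟩ : ℕ) := by
  show (permList π)[(i : ℕ)]'i.2 = _
  simp [permList]

def Con132 {n : ℕ} (π : Equiv.Perm (Fin n)) : Prop :=
  ∃ a b c : ℕ, ∃ ha : a < n, ∃ hb : b < n, ∃ hc : c < n,
    a < b ∧ b < c ∧ (π ⟨a, ha⟩ : ℕ) < (π ⟨c, hc⟩ : ℕ) ∧ (π ⟨c, hc⟩ : ℕ) < (π ⟨b, hb⟩ : ℕ)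

lemma seqContains_iff {n : ℕ} (π : Equiv.Perm (Fin n)) :
    SeqContains (permList π) [1, 3, 2] ↔ Con132 π := by
  constructor
  · rintro ⟨f, hf, hiff⟩
    set i0 : Fin ([1,3,2] : List ℕ).length := ⟨0, by norm_num⟩ with hi0
    set i1 : Fin ([1,3,2] : List ℕ).length := ⟨1, by norm_num⟩ with hi1
    set i2 : Fin ([1,3,2] : List ℕ).length := ⟨2, by norm_num⟩ with hi2
    have h01 : f i0 < f i1 := hf (by rw [hi0, hi1]; exact Fin.mk_lt_mk.mpr (by norm_num))
    have h12 : f i1 < f i2 := hf (by rw [hi1, hi2]; exact Fin.mk_lt_mk.mpr (by norm_num))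
    have h02 := (hiff i0 i2).mp (by norm_num [hi0, hi2])
    have h21 := (hiff i2 i1).mp (by norm_num [hi1, hi2])
    rw [permList_get, permList_get] at h02 h21
    exact ⟨f i0, f i1, f i2,
      by simpa [permList_length] using (f i0).2,
      by simpa [permList_length] using (f i1).2,
      by simpa [permList_length] using (f i2).2,
      h01, h12, h02, h21⟩
  · rintro ⟨a, b, c, ha, hb, hc, hab, hbc, h1, h2⟩
    have hA : a < (permList π).length := by rwa [permList_length]
    have hB : b < (permList π).length := by rwa [permList_length]
    have hC : c < (permList π).length := by rwa [permList_length]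
    refine ⟨fun i => if (i : ℕ) = 0 then ⟨a, hA⟩ else if (i : ℕ) = 1 then ⟨b, hB⟩ else ⟨c, hC⟩,
      ?_, ?_⟩
    · intro i j hij
      have hj3 : (j : ℕ) < 3 := by simpa using j.2
      have hij' : (i : ℕ) < (j : ℕ) := hij
      simp only [Fin.lt_def]
      split_ifs <;> simp_all <;> omega
    · have hpat : ∀ i : Fin ([1,3,2] : List ℕ).length,
          ([1,3,2] : List ℕ).get i = if (i:ℕ) = 0 then 1 else if (i:ℕ) = 1 then 3 else 2 := by
        intro i
        obtain ⟨v, hv⟩ := i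
        simp only [List.length_cons, List.length_nil] at hv
        interval_cases v <;> norm_num
      have hval : ∀ i : Fin ([1,3,2] : List ℕ).length,
          (permList π).get
            (if (i : ℕ) = 0 then ⟨a, hA⟩ else if (i : ℕ) = 1 then ⟨b, hB⟩ else ⟨c, hC⟩) =
          if (i:ℕ) = 0 then (π ⟨a, ha⟩ : ℕ) else if (i:ℕ) = 1 then (π ⟨b, hb⟩ : ℕ)
            else (π ⟨c, hc⟩ : ℕ) := by
        intro i
        split_ifs <;> rw [permList_get]
      intro i j
      simp only []
      rw [hpat i, hpat j, hval i, hval j]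
      split_ifs <;> omega

section Con
variable {n : ℕ} (π : Equiv.Perm (Fin n))

lemma con132_sumOne : Con132 (sumOne π) ↔ Con132 π := by
  constructor
  · rintro ⟨a, b, c, ha, hb, hc, hab, hbc, h1, h2⟩
    have hcn : c < n := by
      by_contra h'
      have hc2 : c = n := by omega
      rw [sumOne_coe_last π c hc hc2] at h2
      have := Fin.is_le (sumOne π ⟨b, hb⟩)
      omega
    have hbn : b < n := by omega
    have han : a < n := by omega
    rw [sumOne_coe' π a ha han, sumOne_coe' π c hc hcn] at h1
    rw [sumOne_coe' π c hc hcn, sumOne_coe' π b hb hbn] at h2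
    exact ⟨a, b, c, han, hbn, hcn, hab, hbc, h1, h2⟩
  · rintro ⟨a, b, c, ha, hb, hc, hab, hbc, h1, h2⟩
    refine ⟨a, b, c, by omega, by omega, by omega, hab, hbc, ?_, ?_⟩
    · rw [sumOne_coe' π a (by omega) ha, sumOne_coe' π c (by omega) hc]; exact h1
    · rw [sumOne_coe' π c (by omega) hc, sumOne_coe' π b (by omega) hb]; exact h2

lemma con132_oneSkew : Con132 (oneSkew π) ↔ Con132 π := by
  constructor
  · rintro ⟨a, b, c, ha, hb, hc, hab, hbc, h1, h2⟩
    have ha0 : 0 < a := by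
      by_contra h'
      have ha2 : a = 0 := by omega
      rw [oneSkew_coe_zero π a ha ha2] at h1
      have hcn : c - 1 < n := by omega
      rw [oneSkew_coe_succ π c (c-1) hc hcn (by omega)] at h1
      have := Fin.is_lt (π ⟨c-1, hcn⟩)
      omega
    have han : a - 1 < n := by omega
    have hbn : b - 1 < n := by omega
    have hcn : c - 1 < n := by omega
    rw [oneSkew_coe_succ π a (a-1) ha han (by omega),
      oneSkew_coe_succ π c (c-1) hc hcn (by omega)] at h1
    rw [oneSkew_coe_succ π c (c-1) hc hcn (by omega),
      oneSkew_coe_succ π b (b-1) hb hbn (by omega)] at h2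
    exact ⟨a-1, b-1, c-1, han, hbn, hcn, by omega, by omega, h1, h2⟩
  · rintro ⟨a, b, c, ha, hb, hc, hab, hbc, h1, h2⟩
    refine ⟨a+1, b+1, c+1, by omega, by omega, by omega, by omega, by omega, ?_, ?_⟩
    · rw [oneSkew_coe_succ π (a+1) a (by omega) ha rfl,
        oneSkew_coe_succ π (c+1) c (by omega) hc rfl]; exact h1
    · rw [oneSkew_coe_succ π (c+1) c (by omega) hc rfl,
        oneSkew_coe_succ π (b+1) b (by omega) hb rfl]; exact h2

end Con

lemma max_first_or_last {n : ℕ} (τ : Equiv.Perm (Fin (n+1)))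
    (hF : IsFishburn τ) (hA : ¬ Con132 τ) :
    (τ ⟨0, Nat.succ_pos n⟩ : ℕ) = n ∨ (τ ⟨n, Nat.lt_succ_self n⟩ : ℕ) = n := by
  by_contra hcon
  push_neg at hcon
  obtain ⟨h0, hlast⟩ := hcon
  set p : Fin (n+1) := τ.symm (Fin.last n) with hp
  have hτp : τ p = Fin.last n := Equiv.apply_symm_apply τ _
  have hvp : (τ p : ℕ) = n := by rw [hτp]; rfl
  have hP0 : 0 < (p : ℕ) := by
    rcases Nat.eq_zero_or_pos (p : ℕ) with h | h
    · exfalso; apply h0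
      have he : p = (⟨0, Nat.succ_pos n⟩ : Fin (n+1)) := Fin.val_injective h
      rw [← he, hvp]
    · exact h
  have hPn : (p : ℕ) < n := by
    have h2 := p.2
    rcases Nat.lt_or_ge (p : ℕ) n with h | h
    · exact h
    · exfalso; apply hlast
      have he : p = (⟨n, Nat.lt_succ_self n⟩ : Fin (n+1)) :=
        Fin.val_injective (by simp only [Fin.val_mk]; omega)
      rw [← he, hvp]
  have hinj : ∀ x y : Fin (n+1), x ≠ y → (τ x : ℕ) ≠ (τ y : ℕ) := by
    intro x y hxy h
    exact hxy (τ.injective (Fin.val_injective h))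
  have hbefore : ∀ c : Fin (n+1), (p : ℕ) < (c : ℕ) → ∀ a : Fin (n+1), (a : ℕ) < (p : ℕ) →
      (τ c : ℕ) < (τ a : ℕ) := by
    intro c hc a haP
    have hcne : (τ c : ℕ) ≠ n := fun hh =>
      hinj c p (by intro h; rw [h] at hc; omega) (by omega)
    have hclt : (τ c : ℕ) < n := lt_of_le_of_ne (Fin.is_le _) hcne
    have hane : (τ a : ℕ) ≠ (τ c : ℕ) := hinj a c (by intro h; rw [h] at haP; omega)
    rcases Nat.lt_or_ge (τ c : ℕ) (τ a : ℕ) with h | h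
    · exact h
    · exfalso; apply hA
      refine ⟨(a : ℕ), (p : ℕ), (c : ℕ), a.2, p.2, c.2, haP, hc, ?_, ?_⟩
      · rw [Fin.eta, Fin.eta]; omega
      · rw [Fin.eta, Fin.eta]; omega
  obtain ⟨q, hqmem, hqmin⟩ := Finset.exists_min_image
    (Finset.univ.filter fun i : Fin (n+1) => (i : ℕ) < (p : ℕ)) (fun i => (τ i : ℕ))
    ⟨⟨0, by omega⟩, by simp only [Finset.mem_filter, Finset.mem_univ, true_and]; exact hP0⟩
  simp only [Finset.mem_filter, Finset.mem_univ, true_and] at hqmem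
  have hq : (q : ℕ) < (p : ℕ) := hqmem
  have hvn : (τ q : ℕ) < n := by
    have h1 : (τ q : ℕ) ≠ n := fun hh =>
      hinj q p (by intro h; rw [h] at hq; omega) (by omega)
    have := Fin.is_le (τ q); omega
  have hv1 : 1 ≤ (τ q : ℕ) := by
    have hc : ((p : ℕ) + 1) < n + 1 := by omega
    have := hbefore ⟨(p : ℕ) + 1, hc⟩ (by simp) q hq
    omega
  set r : Fin (n+1) := τ.symm ⟨(τ q : ℕ) - 1, by omega⟩ with hr
  have hτr : (τ r : ℕ) = (τ q : ℕ) - 1 := by rw [hr, Equiv.apply_symm_apply]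
  have hrp : (p : ℕ) < (r : ℕ) := by
    rcases Nat.lt_trichotomy (r : ℕ) (p : ℕ) with h | h | h
    · exfalso
      have := hqmin r (by simp only [Finset.mem_filter, Finset.mem_univ, true_and]; exact h)
      omega
    · exfalso
      have he : r = p := Fin.val_injective h
      rw [he] at hτr; omega
    · exact h
  have hq1 : (q : ℕ) + 1 < n + 1 := by omega
  have hq1v : (τ q : ℕ) < (τ ⟨(q : ℕ) + 1, hq1⟩ : ℕ) := by
    rcases Nat.lt_or_ge ((q : ℕ) + 1) (p : ℕ) with h | h
    · have hle := hqmin ⟨(q : ℕ) + 1, hq1⟩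
        (by simp only [Finset.mem_filter, Finset.mem_univ, true_and]; exact h)
      have hne := hinj q ⟨(q : ℕ) + 1, hq1⟩ (by
        intro hh
        have : (q : ℕ) = (q : ℕ) + 1 := congrArg Fin.val hh
        omega)
      omega
    · have he : (⟨(q : ℕ) + 1, hq1⟩ : Fin (n+1)) = p := by ext; simp only []; omega
      rw [he]; omega
  refine absurd ?_ (hF (q : ℕ) (r : ℕ) q.2 r.2 (by omega) ?_)
  · rw [Fin.eta]
    exact hq1v
  · rw [Fin.eta, Fin.eta]; omega

lemma optionCongr_removeNone {α : Type*} (C : Option α ≃ Option α) (hC : C none = none) :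
    Equiv.optionCongr C.removeNone = C := by
  apply Equiv.ext
  intro o
  cases o with
  | none => simp only [Equiv.optionCongr_apply, Option.map_none]; exact hC.symm
  | some a =>
    have hex : ∃ x', C (some a) = some x' := by
      cases h' : C (some a) with
      | none => exact absurd (C.injective (h'.trans hC.symm)) (by simp)
      | some b => exact ⟨b, rfl⟩
    calc Equiv.optionCongr C.removeNone (some a) = some (C.removeNone a) := by simp
      _ = C (some a) := Equiv.removeNone_some C hex

lemma exists_oneSkew {n : ℕ} (τ : Equiv.Perm (Fin (n+1))) (h : τ 0 = Fin.last n) :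
    ∃ π : Equiv.Perm (Fin n), τ = oneSkew π := by
  set C : Option (Fin n) ≃ Option (Fin n) :=
    ((finSuccEquiv n).symm.trans (τ.trans finSuccEquivLast)) with hCdef
  have hC : C none = none := by
    simp [hCdef, Equiv.trans_apply, finSuccEquiv_symm_none, h, finSuccEquivLast_last]
  refine ⟨C.removeNone, ?_⟩
  have hoc : Equiv.optionCongr C.removeNone = C := optionCongr_removeNone C hC
  ext x
  rw [oneSkew, hoc]
  simp [hCdef, Equiv.trans_apply]

lemma exists_sumOne {n : ℕ} (τ : Equiv.Perm (Fin (n+1))) (h : τ (Fin.last n) = Fin.last n) :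
    ∃ π : Equiv.Perm (Fin n), τ = sumOne π := by
  set C : Option (Fin n) ≃ Option (Fin n) :=
    (finSuccEquivLast.symm.trans (τ.trans finSuccEquivLast)) with hCdef
  have hC : C none = none := by
    simp [hCdef, Equiv.trans_apply, finSuccEquivLast_symm_none, h, finSuccEquivLast_last]
  refine ⟨C.removeNone, ?_⟩
  have hoc : Equiv.optionCongr C.removeNone = C := optionCongr_removeNone C hC
  ext x
  rw [sumOne, hoc]
  simp [hCdef, Equiv.trans_apply]

lemma oneSkew_injective {n : ℕ} : Function.Injective (@oneSkew n) := by
  intro π π' h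
  ext i
  have := congrArg (fun e : Equiv.Perm (Fin (n+1)) => e i.succ) h
  simp only [oneSkew_succ] at this
  exact congrArg Fin.val (Fin.castSucc_injective n this)

lemma sumOne_injective {n : ℕ} : Function.Injective (@sumOne n) := by
  intro π π' h
  ext i
  have := congrArg (fun e : Equiv.Perm (Fin (n+1)) => e i.castSucc) h
  simp only [sumOne_castSucc] at this
  exact congrArg Fin.val (Fin.castSucc_injective n this)

lemma oneSkew_ne_sumOne {n : ℕ} (hn : 0 < n) (π π' : Equiv.Perm (Fin n)) :
    oneSkew π ≠ sumOne π' := by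
  intro h
  have h0 : (⟨0, Nat.succ_pos n⟩ : Fin (n+1)) = (⟨0, hn⟩ : Fin n).castSucc := rfl
  have e1 : oneSkew π ⟨0, Nat.succ_pos n⟩ = Fin.last n := oneSkew_zero π
  have e2 : sumOne π' ⟨0, Nat.succ_pos n⟩ = (π' ⟨0, hn⟩).castSucc := by
    rw [h0, sumOne_castSucc]
  rw [h, e2] at e1
  exact absurd (congrArg Fin.val e1) (by have := Fin.is_lt (π' ⟨0, hn⟩); simp; omega)

lemma avoids_iff {n : ℕ} (π : Equiv.Perm (Fin n)) :
    AvoidsPat π [1, 3, 2] ↔ ¬ Con132 π := by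
  unfold AvoidsPat
  exact not_congr (seqContains_iff π)

theorem stmt5 (m : ℕ) (hm : 2 ≤ m) :
    (∀ τ : Equiv.Perm (Fin (m + 1)),
      (IsFishburn τ ∧ AvoidsPat τ [1, 3, 2]) ↔
        ((∃ π : Equiv.Perm (Fin m), IsFishburn π ∧ AvoidsPat π [1, 3, 2] ∧ τ = oneSkew π) ∨
         (∃ π : Equiv.Perm (Fin m), IsFishburn π ∧ AvoidsPat π [1, 3, 2] ∧ τ = sumOne π))) ∧
    (∀ π π' : Equiv.Perm (Fin m), oneSkew π ≠ sumOne π') ∧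
    Nat.card {τ : Equiv.Perm (Fin (m + 1)) // IsFishburn τ ∧ AvoidsPat τ [1, 3, 2]} =
      2 * Nat.card {π : Equiv.Perm (Fin m) // IsFishburn π ∧ AvoidsPat π [1, 3, 2]} := by
  have key : ∀ τ : Equiv.Perm (Fin (m + 1)),
      (IsFishburn τ ∧ AvoidsPat τ [1, 3, 2]) ↔
        ((∃ π : Equiv.Perm (Fin m), IsFishburn π ∧ AvoidsPat π [1, 3, 2] ∧ τ = oneSkew π) ∨
         (∃ π : Equiv.Perm (Fin m), IsFishburn π ∧ AvoidsPat π [1, 3, 2] ∧ τ = sumOne π)) := by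
    intro τ
    constructor
    · rintro ⟨hF, hA⟩
      have hC : ¬ Con132 τ := (avoids_iff τ).mp hA
      rcases max_first_or_last τ hF hC with h | h
      · have h' : τ 0 = Fin.last m := by
          have h0 : (0 : Fin (m+1)) = ⟨0, Nat.succ_pos m⟩ := rfl
          rw [h0]
          exact Fin.val_injective (by simpa using h)
        obtain ⟨π, rfl⟩ := exists_oneSkew τ h'
        left
        refine ⟨π, (isFishburn_oneSkew π).mp hF, ?_, rfl⟩
        exact (avoids_iff π).mpr fun hc => hC ((con132_oneSkew π).mpr hc)
      · have h' : τ (Fin.last m) = Fin.last m := by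
          have h0 : (Fin.last m) = (⟨m, Nat.lt_succ_self m⟩ : Fin (m+1)) := rfl
          rw [h0]
          exact Fin.val_injective (by simpa using h)
        obtain ⟨π, rfl⟩ := exists_sumOne τ h'
        right
        refine ⟨π, (isFishburn_sumOne π).mp hF, ?_, rfl⟩
        exact (avoids_iff π).mpr fun hc => hC ((con132_sumOne π).mpr hc)
    · rintro (⟨π, hF, hA, rfl⟩ | ⟨π, hF, hA, rfl⟩)
      · exact ⟨(isFishburn_oneSkew π).mpr hF,
          (avoids_iff _).mpr fun hc => (avoids_iff π).mp hA ((con132_oneSkew π).mp hc)⟩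
      · exact ⟨(isFishburn_sumOne π).mpr hF,
          (avoids_iff _).mpr fun hc => (avoids_iff π).mp hA ((con132_sumOne π).mp hc)⟩
  refine ⟨key, fun π π' => oneSkew_ne_sumOne (by omega) π π', ?_⟩
  let g : ({π : Equiv.Perm (Fin m) // IsFishburn π ∧ AvoidsPat π [1, 3, 2]} ⊕
      {π : Equiv.Perm (Fin m) // IsFishburn π ∧ AvoidsPat π [1, 3, 2]}) →
      {τ : Equiv.Perm (Fin (m + 1)) // IsFishburn τ ∧ AvoidsPat τ [1, 3, 2]} :=
    fun x => match x with
    | Sum.inl p => ⟨oneSkew p.1, (key _).mpr (Or.inl ⟨p.1, p.2.1, p.2.2, rfl⟩)⟩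
    | Sum.inr p => ⟨sumOne p.1, (key _).mpr (Or.inr ⟨p.1, p.2.1, p.2.2, rfl⟩)⟩
  have hbij : Function.Bijective g := by
    constructor
    · rintro (⟨p, hp⟩ | ⟨p, hp⟩) (⟨q, hq⟩ | ⟨q, hq⟩) h <;>
        simp only [g, Subtype.mk.injEq] at h
      · exact congrArg Sum.inl (Subtype.ext (oneSkew_injective h))
      · exact absurd h (oneSkew_ne_sumOne (by omega) _ _)
      · exact absurd h.symm (oneSkew_ne_sumOne (by omega) _ _)
      · exact congrArg Sum.inr (Subtype.ext (sumOne_injective h))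
    · rintro ⟨τ, hτ⟩
      rcases (key τ).mp hτ with ⟨π, h1, h2, h3⟩ | ⟨π, h1, h2, h3⟩
      · exact ⟨Sum.inl ⟨π, h1, h2⟩, Subtype.ext h3.symm⟩
      · exact ⟨Sum.inr ⟨π, h1, h2⟩, Subtype.ext h3.symm⟩
  rw [← Nat.card_eq_of_bijective g hbij, Nat.card_sum]
  omega
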